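/- arXiv:1002.0761 — 2 statements merged into one kernel-verified Lean document; each statement's English description precedes it below -/
import Mathlib

section
/- Let f = ∑_{i=0}^9 C(9,i) a_i x^{9−i} y^i be a binary nonic with (f,f)_8 = x². Suppose moreover a_9² = 0, a_8² − a_7 a_9 = 0, 3 a_7² − 4 a_6 a_8 + a_5 a_9 = 0, and 10 a_6² − 15 a_5 a_7 + 6 a_4 a_8 − a_3 a_9 = 0. Then a_5 = a_6 = a_7 = a_8 = a_9 = 0 and f has a root of multiplicity at least 5 (namely x^5 | f). -/
/-!
The coefficient conditions are triangular: given that the later coefficients vanish, each one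
reduces to `a_k ^ 2 = 0`, which gives `a₉ = a₈ = a₇ = a₆ = 0` in turn. A mixed derivative of
order `p + q` of a binomially normalised form `∑ C(n,i) a_i x^(n-i) y^i` is again such a form, of
degree `n - p - q` with coefficients shifted by `q`. Hence evaluating `(f,f)_8` at `(0,1)`, which
reads off its `y²`-coefficient, gives `∑ (-1)^i C(8,i) a_(i+1) a_(9-i)`; this reduces to `70 a₅²`,
which vanishes since `(f,f)_8 = x²`. Once `a₅, …, a₉` vanish, every monomial of `f` contains `x⁵`.
-/

open MvPolynomial

/-- Iterated partial derivative `∂^a/∂x^a ∂^b/∂y^b`. -/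
noncomputable def dxy (a b : ℕ) (g : MvPolynomial (Fin 2) ℂ) : MvPolynomial (Fin 2) ℂ :=
  (⇑(pderiv (0 : Fin 2)))^[a] ((⇑(pderiv (1 : Fin 2)))^[b] g)

/-- The `p`-th transvectant of `g ∈ V_m` and `h ∈ V_n`. -/
noncomputable def transv (m n p : ℕ) (g h : MvPolynomial (Fin 2) ℂ) : MvPolynomial (Fin 2) ℂ :=
  (((m - p).factorial * (n - p).factorial : ℂ) / ((m.factorial : ℂ) * n.factorial)) •
    ∑ i ∈ Finset.range (p + 1),
      ((-1 : ℂ) ^ i * (p.choose i : ℂ)) • (dxy (p - i) i g * dxy i (p - i) h)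

noncomputable def binaryForm {R : Type*} [CommSemiring R] (n : ℕ) (a : ℕ → R) :
    MvPolynomial (Fin 2) R :=
  ∑ i ∈ Finset.range (n + 1), C ((n.choose i : R) * a i) * X 0 ^ (n - i) * X 1 ^ i

section

variable {R : Type*} [CommSemiring R]

theorem pderiv_zero_C_mul_X_pow_mul_X_pow (c : R) (m k : ℕ) :
    pderiv 0 (C c * X 0 ^ m * X 1 ^ k : MvPolynomial (Fin 2) R) =
      C (c * m) * X 0 ^ (m - 1) * X 1 ^ k := by
  rw [pderiv_mul, pderiv_C_mul, pderiv_pow, pderiv_pow, pderiv_X_self,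
    pderiv_X_of_ne (by decide : (1 : Fin 2) ≠ 0), C_mul, map_natCast]
  ring

theorem pderiv_one_C_mul_X_pow_mul_X_pow (c : R) (m k : ℕ) :
    pderiv 1 (C c * X 0 ^ m * X 1 ^ k : MvPolynomial (Fin 2) R) =
      C (c * k) * X 0 ^ m * X 1 ^ (k - 1) := by
  rw [pderiv_mul, pderiv_C_mul, pderiv_pow, pderiv_pow, pderiv_X_self,
    pderiv_X_of_ne (by decide : (0 : Fin 2) ≠ 1), C_mul, map_natCast]
  ring

namespace binaryForm

theorem pderiv_zero (n : ℕ) (a : ℕ → R) :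
    pderiv 0 (binaryForm (n + 1) a) = (n + 1) • binaryForm n a := by
  rw [binaryForm, map_sum, Finset.sum_range_succ, binaryForm, Finset.smul_sum]
  simp only [pderiv_zero_C_mul_X_pow_mul_X_pow, Nat.sub_self, Nat.cast_zero, mul_zero, map_zero,
    zero_mul, add_zero]
  refine Finset.sum_congr rfl fun i _ => ?_
  rw [nsmul_eq_mul, ← C_eq_coe_nat, Nat.sub_right_comm, Nat.add_sub_cancel,
    ← mul_assoc, ← mul_assoc, ← C_mul]
  congr 3
  rw [mul_right_comm, ← Nat.cast_mul, ← Nat.choose_mul_succ_eq]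
  push_cast; ring

theorem pderiv_one (n : ℕ) (a : ℕ → R) :
    pderiv 1 (binaryForm (n + 1) a) = (n + 1) • binaryForm n (fun i => a (i + 1)) := by
  rw [binaryForm, map_sum, Finset.sum_range_succ', binaryForm, Finset.smul_sum]
  simp only [pderiv_one_C_mul_X_pow_mul_X_pow, Nat.cast_zero, mul_zero, map_zero,
    zero_mul, add_zero]
  refine Finset.sum_congr rfl fun i _ => ?_
  rw [nsmul_eq_mul, ← C_eq_coe_nat, Nat.add_sub_cancel, Nat.add_sub_add_right,
    ← mul_assoc, ← mul_assoc, ← C_mul]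
  congr 3
  rw [mul_right_comm, ← Nat.cast_mul, ← Nat.add_one_mul_choose_eq]
  push_cast; ring

theorem iterate_pderiv_one (q m : ℕ) (a : ℕ → R) :
    (pderiv 1)^[q] (binaryForm (m + q) a) =
      (m + q).descFactorial q • binaryForm m (fun i => a (i + q)) := by
  induction q generalizing m with
  | zero => simp
  | succ q ih =>
    rw [Function.iterate_succ_apply', ← Nat.add_assoc, Nat.add_right_comm, ih, map_nsmul,
      pderiv_one, smul_smul, Nat.descFactorial_succ, Nat.add_sub_cancel, mul_comm]
    simp only [Nat.add_right_comm _ 1 q, add_assoc]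

theorem iterate_pderiv_zero (p m : ℕ) (a : ℕ → R) :
    (pderiv 0)^[p] (binaryForm (m + p) a) = (m + p).descFactorial p • binaryForm m a := by
  induction p generalizing m with
  | zero => simp
  | succ p ih =>
    rw [Function.iterate_succ_apply', ← Nat.add_assoc, Nat.add_right_comm, ih, map_nsmul,
      pderiv_zero, smul_smul, Nat.descFactorial_succ, Nat.add_sub_cancel, mul_comm]

theorem X_zero_pow_dvd {n k : ℕ} {a : ℕ → R} (h : ∀ i ≤ n, n < i + k → a i = 0) :
    X 0 ^ k ∣ binaryForm n a := by
  refine Finset.dvd_sum fun i hi => ?_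
  have hi : i ≤ n := Finset.mem_range_succ_iff.mp hi
  by_cases hik : i + k ≤ n
  · exact ((pow_dvd_pow _ (by omega)).mul_left _).mul_right _
  · simp [h i hi (by omega)]

end binaryForm

end

theorem dxy_binaryForm (p q r : ℕ) (a : ℕ → ℂ) :
    dxy p q (binaryForm (r + p + q) a) =
      (r + p + q).descFactorial (p + q) • binaryForm r (fun i => a (i + q)) := by
  have hcomm : Function.Commute (pderiv 0 : MvPolynomial (Fin 2) ℂ → MvPolynomial (Fin 2) ℂ)
      ((r + p + q).descFactorial q • ·) :=
    fun x => map_nsmul _ _ x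
  rw [dxy, binaryForm.iterate_pderiv_one, (hcomm.iterate_left p).eq,
    binaryForm.iterate_pderiv_zero, smul_smul, mul_comm,
    ← Nat.descFactorial_mul_descFactorial (Nat.le_add_left q p), Nat.add_sub_cancel,
    Nat.add_sub_cancel]

theorem eval_dxy_binaryForm {p q n : ℕ} (h : 1 + p + q = n) (a : ℕ → ℂ) :
    eval ![0, 1] (dxy p q (binaryForm n a)) = n.factorial * a (q + 1) := by
  subst h
  have hfact : (1 + p + q).descFactorial (p + q) = (1 + p + q).factorial := by
    simpa [add_assoc] using Nat.factorial_mul_descFactorial (Nat.le_add_left (p + q) 1)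
  rw [dxy_binaryForm, hfact, binaryForm]
  simp [Finset.sum_range_succ, add_comm 1 q]

theorem eval_transv_binaryForm_self (n : ℕ) (a : ℕ → ℂ) :
    eval ![0, 1] (transv (n + 1) (n + 1) n (binaryForm (n + 1) a) (binaryForm (n + 1) a)) =
      ∑ i ∈ Finset.range (n + 1), (-1) ^ i * n.choose i * a (i + 1) * a (n - i + 1) := by
  rw [transv, smul_eval, map_sum, Finset.mul_sum]
  refine Finset.sum_congr rfl fun i hi => ?_
  have hi : i ≤ n := Finset.mem_range_succ_iff.mp hi
  rw [smul_eval, eval_mul, eval_dxy_binaryForm (by omega), eval_dxy_binaryForm (by omega),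
    Nat.add_sub_cancel_left, Nat.factorial_one, Nat.cast_one]
  have hfact : ((n + 1).factorial : ℂ) ≠ 0 := Nat.cast_ne_zero.mpr (Nat.factorial_ne_zero _)
  field_simp

/-- Case 2 of Proposition `nullsmall`: if a binary nonic `f` satisfies `(f,f)_8 = x²` and
`a₉² = 0`, `a₈² − a₇a₉ = 0`, `3a₇² − 4a₆a₈ + a₅a₉ = 0`, `10a₆² − 15a₅a₇ + 6a₄a₈ − a₃a₉ = 0`,
then `a₅ = a₆ = a₇ = a₈ = a₉ = 0` and `x⁵ ∣ f`. -/
theorem nonic_case2_nullform (a : ℕ → ℂ)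
    (f : MvPolynomial (Fin 2) ℂ)
    (hf : f = ∑ i ∈ Finset.range 10, C ((Nat.choose 9 i : ℂ) * a i) * X 0 ^ (9 - i) * X 1 ^ i)
    (hl : transv 9 9 8 f f = X 0 ^ 2)
    (e1 : a 9 ^ 2 = 0)
    (e2 : a 8 ^ 2 - a 7 * a 9 = 0)
    (e3 : 3 * a 7 ^ 2 - 4 * a 6 * a 8 + a 5 * a 9 = 0)
    (e4 : 10 * a 6 ^ 2 - 15 * a 5 * a 7 + 6 * a 4 * a 8 - a 3 * a 9 = 0) :
    a 5 = 0 ∧ a 6 = 0 ∧ a 7 = 0 ∧ a 8 = 0 ∧ a 9 = 0 ∧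
      (X 0 : MvPolynomial (Fin 2) ℂ) ^ 5 ∣ f := by
  have h9 : a 9 = 0 := pow_eq_zero_iff two_ne_zero |>.mp e1
  have h8 : a 8 = 0 := pow_eq_zero_iff two_ne_zero |>.mp (by linear_combination e2 + a 7 * h9)
  have h7 : a 7 = 0 := pow_eq_zero_iff two_ne_zero |>.mp
    (by linear_combination (e3 + 4 * a 6 * h8 - a 5 * h9) / 3)
  have h6 : a 6 = 0 := pow_eq_zero_iff two_ne_zero |>.mp
    (by linear_combination (e4 + 15 * a 5 * h7 - 6 * a 4 * h8 + a 3 * h9) / 10)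
  have hform : f = binaryForm 9 a := hf
  have h5 : a 5 = 0 := by
    have key := eval_transv_binaryForm_self 8 a
    rw [← hform, hl] at key
    simpa [Finset.sum_range_succ, h6, h7, h8, h9, Nat.choose_eq_zero_iff] using key
  refine ⟨h5, h6, h7, h8, h9, hform ▸ binaryForm.X_zero_pow_dvd fun i hi hik => ?_⟩
  have h5i : 5 ≤ i := by omega
  interval_cases i <;> assumption
end

section
/- Let a_6, a_7 ∈ ℂ with a_7 ≠ 0, and define a_5 = 2a_6²/(3a_7), a_4 = 10a_6³/(27a_7²), a_3 = 5a_6⁴/(27a_7³), a_2 = 7a_6⁵/(81a_7⁴), a_1 = 28a_6⁶/(729a_7⁵), a_0 = 4a_6⁷/(243a_7⁶). Let f = ∑_{i=0}^7 C(9,i) a_i x^{9−i} y^i (with a_8 = a_9 = 0). Then the sixth transvectant q = (f,f)_6 vanishes identically. -/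
/-!
With `t = a₆ / (3 a₇)` the coefficients are `a_{7-k} = C(k+2, 2) a₇ tᵏ`, so
`f = 36 a₇ x² (y + t x)⁷`: `f` is the image of `36 a₇ x² y⁷` under the shear `y ↦ y + t x`.
Up to normalization, `(g, h)_p = μ (Ω^p (g ⊗ h))` for Cayley's operator
`Ω = ∂ₓ ⊗ ∂_y - ∂_y ⊗ ∂ₓ` and the multiplication `μ`; conjugating by the shear replaces `∂ₓ`
by `∂ₓ + t ∂_y`, which leaves `Ω` unchanged (the two `t ∂_y ⊗ ∂_y` terms cancel). Hence `(f, f)₆` is the shear of `(x² y⁷, x² y⁷)₆`, which vanishes term by term: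
each term differentiates one of the two factors at least three times in `x`.
-/

open MvPolynomial

open TensorProduct Finset

theorem pderiv_pderiv_comm {σ R : Type*} [CommSemiring R] (i j : σ) (p : MvPolynomial σ R) :
    pderiv i (pderiv j p) = pderiv j (pderiv i p) := by
  classical
  induction p using MvPolynomial.induction_on with
  | C a => simp
  | add p q hp hq => simp [hp, hq]
  | mul_X p k hp =>
    simp only [pderiv_mul, map_add, hp, pderiv_X, Pi.single_apply]
    split_ifs <;> simp [add_comm, add_left_comm]

local notation "ℂ[x,y]" => MvPolynomial (Fin 2) ℂ

noncomputable def partialDeriv (i : Fin 2) : Module.End ℂ ℂ[x,y] := (pderiv i).toLinearMap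

local notation "∂" => partialDeriv

theorem coe_partialDeriv (i : Fin 2) : ⇑(∂ i) = pderiv i := rfl

theorem commute_partialDeriv (i j : Fin 2) : Commute (∂ i) (∂ j) :=
  LinearMap.ext (pderiv_pderiv_comm i j)

theorem dxy_eq_pow_mul_pow (a b : ℕ) (g : ℂ[x,y]) : dxy a b g = (∂ 0 ^ a * ∂ 1 ^ b) g := by
  rw [Module.End.mul_apply, Module.End.pow_apply, Module.End.pow_apply]; rfl

noncomputable def cayleyOmega : Module.End ℂ (ℂ[x,y] ⊗[ℂ] ℂ[x,y]) :=
  map (∂ 0) (∂ 1) - map (∂ 1) (∂ 0)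

theorem cayleyOmega_pow (p : ℕ) :
    cayleyOmega ^ p = ∑ i ∈ range (p + 1),
      ((-1 : ℂ) ^ i * p.choose i) • map (∂ 0 ^ (p - i) * ∂ 1 ^ i) (∂ 0 ^ i * ∂ 1 ^ (p - i)) := by
  have hΩ : cayleyOmega = (-1 : ℂ) • map (∂ 1) (∂ 0) + map (∂ 0) (∂ 1) := by
    rw [cayleyOmega]; module
  have hc : Commute ((-1 : ℂ) • map (∂ 1) (∂ 0)) (map (∂ 0) (∂ 1)) := by
    refine Commute.smul_left ?_ _
    simp only [Commute, SemiconjBy, ← TensorProduct.map_mul, (commute_partialDeriv 0 1).eq]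
  rw [hΩ, hc.add_pow]
  refine sum_congr rfl fun i _ => ?_
  rw [smul_pow, TensorProduct.map_pow, TensorProduct.map_pow, smul_mul_assoc, smul_mul_assoc,
    ← TensorProduct.map_mul, ((commute_partialDeriv 1 0).pow_pow _ _).eq, ← Nat.cast_comm,
    ← nsmul_eq_mul, ← Nat.cast_smul_eq_nsmul ℂ, smul_smul, mul_comm]

theorem transv_eq_mul'_cayleyOmega_pow (m n p : ℕ) (g h : ℂ[x,y]) :
    transv m n p g h = (((m - p).factorial * (n - p).factorial : ℂ) / (m.factorial * n.factorial)) •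
      LinearMap.mul' ℂ ℂ[x,y] ((cayleyOmega ^ p) (g ⊗ₜ h)) := by
  simp [transv, cayleyOmega_pow, dxy_eq_pow_mul_pow, map_sum, LinearMap.sum_apply]

theorem mul'_comp_map_algHom {R A B : Type*} [CommSemiring R] [Semiring A] [Semiring B]
    [Algebra R A] [Algebra R B] (φ : A →ₐ[R] B) :
    LinearMap.mul' R B ∘ₗ map φ.toLinearMap φ.toLinearMap = φ.toLinearMap ∘ₗ LinearMap.mul' R A :=
  TensorProduct.ext' fun _ _ => (map_mul φ _ _).symm

noncomputable def shear (t : ℂ) : ℂ[x,y] →ₐ[ℂ] ℂ[x,y] := aeval ![X 0, X 1 + C t * X 0]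

@[simp]
theorem shear_X_zero (t : ℂ) : shear t (X 0) = X 0 := aeval_X _ _

@[simp]
theorem shear_X_one (t : ℂ) : shear t (X 1) = X 1 + C t * X 0 := aeval_X _ _

theorem pderiv_one_shear (t : ℂ) (p : ℂ[x,y]) : pderiv 1 (shear t p) = shear t (pderiv 1 p) := by
  induction p using MvPolynomial.induction_on with
  | C a => simp
  | add p q hp hq => simp [hp, hq]
  | mul_X p k hp => fin_cases k <;> simp [hp]

theorem pderiv_zero_shear (t : ℂ) (p : ℂ[x,y]) :
    pderiv 0 (shear t p) = shear t (pderiv 0 p + C t * pderiv 1 p) := by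
  induction p using MvPolynomial.induction_on with
  | C a => simp
  | add p q hp hq => simp only [map_add, mul_add, hp, hq]; abel
  | mul_X p k hp =>
    fin_cases k <;>
    simp only [Fin.zero_eta, Fin.mk_one, map_mul, map_add, shear_X_zero, shear_X_one,
      Derivation.leibniz, pderiv_X_self, pderiv_X_of_ne one_ne_zero, pderiv_X_of_ne zero_ne_one,
      derivation_C, algHom_C, algebraMap_eq, smul_eq_mul, map_zero, map_one, hp] <;>
    ring

theorem commute_cayleyOmega_map_shear (t : ℂ) :
    Commute cayleyOmega (map (shear t).toLinearMap (shear t).toLinearMap) := by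
  refine TensorProduct.ext' fun g h => ?_
  simp only [Module.End.mul_apply, cayleyOmega, LinearMap.sub_apply, map_tmul, coe_partialDeriv,
    AlgHom.toLinearMap_apply, pderiv_zero_shear, pderiv_one_shear, ← smul_eq_C_mul, map_add,
    map_sub, map_smul, add_tmul, tmul_add, tmul_smul, ← smul_tmul']
  abel

theorem transv_shear (t : ℂ) (m n p : ℕ) (g h : ℂ[x,y]) :
    transv m n p (shear t g) (shear t h) = shear t (transv m n p g h) := by
  have hΩ : (cayleyOmega ^ p) (shear t g ⊗ₜ shear t h) =
      map (shear t).toLinearMap (shear t).toLinearMap ((cayleyOmega ^ p) (g ⊗ₜ h)) :=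
    LinearMap.congr_fun ((commute_cayleyOmega_map_shear t).pow_left p).eq (g ⊗ₜ h)
  rw [transv_eq_mul'_cayleyOmega_pow, transv_eq_mul'_cayleyOmega_pow, map_smul, hΩ]
  exact congrArg _ (LinearMap.congr_fun (mul'_comp_map_algHom (shear t)) _)

theorem iterate_pderiv_zero_monomial (a k l : ℕ) (c : ℂ) :
    (pderiv 0)^[a] (C c * X 0 ^ k * X 1 ^ l : ℂ[x,y])
      = C (c * k.descFactorial a) * X 0 ^ (k - a) * X 1 ^ l := by
  induction a with
  | zero => simp
  | succ a ih =>
    rw [Function.iterate_succ_apply', ih, Nat.descFactorial_succ]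
    simp only [Derivation.leibniz, Derivation.leibniz_pow, pderiv_X_self, pderiv_C,
      pderiv_X_of_ne one_ne_zero, smul_eq_mul, nsmul_eq_mul, Nat.sub_sub, Nat.cast_mul, C_mul,
      map_natCast, Derivation.map_natCast, mul_zero, add_zero]
    ring

theorem dxy_monomial_eq_zero {a b k l : ℕ} {c : ℂ} (hk : k < a) :
    dxy a b (C c * X 0 ^ k * X 1 ^ l) = 0 := by
  rw [dxy_eq_pow_mul_pow, ((commute_partialDeriv 0 1).pow_pow a b).eq, Module.End.mul_apply,
    Module.End.pow_apply (∂ 0), coe_partialDeriv, iterate_pderiv_zero_monomial,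
    (Nat.descFactorial_eq_zero_iff_lt).2 hk]
  simp

theorem transv_monomial_eq_zero {m n p k k' l l' : ℕ} {c c' : ℂ} (hp : k + k' < p) :
    transv m n p (C c * X 0 ^ k * X 1 ^ l) (C c' * X 0 ^ k' * X 1 ^ l') = 0 := by
  rw [transv, sum_eq_zero, smul_zero]
  intro i _
  rcases lt_or_ge k (p - i) with hki | hki
  · rw [dxy_monomial_eq_zero hki, zero_mul, smul_zero]
  · rw [dxy_monomial_eq_zero (by omega : k' < i), mul_zero, smul_zero]

/-- With the special coefficient substitutions of Case 1 of the nonic nullform lemma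
(and `a₈ = a₉ = 0`), the sixth transvectant `q = (f,f)_6` vanishes identically. -/
theorem nonic_q_vanishes (a6 a7 : ℂ) (ha7 : a7 ≠ 0)
    (a : ℕ → ℂ)
    (h0 : a 0 = 4 * a6 ^ 7 / (243 * a7 ^ 6))
    (h1 : a 1 = 28 * a6 ^ 6 / (729 * a7 ^ 5))
    (h2 : a 2 = 7 * a6 ^ 5 / (81 * a7 ^ 4))
    (h3 : a 3 = 5 * a6 ^ 4 / (27 * a7 ^ 3))
    (h4 : a 4 = 10 * a6 ^ 3 / (27 * a7 ^ 2))
    (h5 : a 5 = 2 * a6 ^ 2 / (3 * a7))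
    (h6 : a 6 = a6) (h7 : a 7 = a7) (h8 : a 8 = 0) (h9 : a 9 = 0)
    (f : MvPolynomial (Fin 2) ℂ)
    (hf : f = ∑ i ∈ Finset.range 10, C ((Nat.choose 9 i : ℂ) * a i) * X 0 ^ (9 - i) * X 1 ^ i) :
    transv 9 9 6 f f = 0 := by
  have hf_shear : f = shear (a6 / (3 * a7)) (C (36 * a7) * X 0 ^ 2 * X 1 ^ 7) := by
    refine hf.trans (MvPolynomial.funext fun v => ?_)
    simp only [sum_range_succ, sum_range_zero, h0, h1, h2, h3, h4, h5, h6, h7, h8, h9, map_add,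
      map_mul, map_pow, map_zero, algHom_C, algebraMap_eq, shear_X_zero, shear_X_one, eval_C, eval_X]
    norm_num [Nat.choose]
    field_simp
    ring
  rw [hf_shear, transv_shear, transv_monomial_eq_zero, map_zero]
  norm_num
end
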